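/- Let λ₋, λ₊, μ₋, μ₊ > 0. Define ρ : ℝ → ℝ by ρ(y) = e^{λ₋ y} for y < 0 and ρ(y) = e^{−λ₊ y} for y ≥ 0, and 𝒜 : ℝ → ℝ by 𝒜(w) = e^{μ₋ w} for w < 0 and 𝒜(w) = e^{−μ₊ w} for w ≥ 0. Then the convolution A(z) = ∫_ℝ 𝒜(z − y) ρ(y) dy is differentiable at z = 0 with A'(0) = μ₋/(μ₋ + λ₊) − μ₊/(μ₊ + λ₋); in particular A'(0) = 0 if and only if λ₋ μ₋ = λ₊ μ₊. -/

import Mathlib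

open MeasureTheory Filter

open Real Set in
private lemma exp_integrableOn_Ioi {b : ℝ} (hb : 0 < b) (a : ℝ) :
    IntegrableOn (fun x : ℝ => Real.exp (-(b * x))) (Ioi a) := by
  simpa [neg_mul] using exp_neg_integrableOn_Ioi a hb

open Real Set in
private lemma exp_integral_Ioi {b : ℝ} (hb : 0 < b) (a : ℝ) :
    ∫ x in Ioi a, Real.exp (-(b * x)) = Real.exp (-(b * a)) / b := by
  have h := integral_comp_mul_left_Ioi (fun u => Real.exp (-u)) a hb
  simp only [smul_eq_mul] at h
  rw [integral_exp_neg_Ioi] at h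
  rw [h]
  field_simp

open Real Set in
private lemma exp_integrableOn_Ici {b : ℝ} (hb : 0 < b) (a : ℝ) :
    IntegrableOn (fun x : ℝ => Real.exp (-(b * x))) (Ici a) :=
  (integrableOn_Ici_iff_integrableOn_Ioi (by simp)).2 (exp_integrableOn_Ioi hb a)

open Real Set in
private lemma exp_integral_Ici {b : ℝ} (hb : 0 < b) (a : ℝ) :
    ∫ x in Ici a, Real.exp (-(b * x)) = Real.exp (-(b * a)) / b := by
  rw [integral_Ici_eq_integral_Ioi, exp_integral_Ioi hb]

open Real Set in
private lemma exp_integrableOn_Iic {b : ℝ} (hb : 0 < b) (c : ℝ) :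
    IntegrableOn (fun x : ℝ => Real.exp (b * x)) (Iic c) := by
  have A : MeasurableEmbedding (fun x : ℝ => -x) :=
    (Homeomorph.neg ℝ).isClosedEmbedding.measurableEmbedding
  have h1 : (volume : Measure ℝ).restrict (Iic c) =
      ((volume : Measure ℝ).restrict (Ici (-c))).map (fun x : ℝ => -x) := by
    conv_lhs => rw [← Measure.map_neg_eq_self (volume : Measure ℝ)]
    rw [Measure.restrict_map A.measurable measurableSet_Iic]
    congr 1
    ext x
    simp [neg_le]
  rw [IntegrableOn, h1, A.integrable_map_iff]
  have h2 : ((fun x : ℝ => Real.exp (b * x)) ∘ fun x : ℝ => -x)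
      = fun x : ℝ => Real.exp (-(b * x)) := by
    ext x; simp [Function.comp]
  rw [h2]
  exact exp_integrableOn_Ici hb (-c)

open Real Set in
private lemma exp_integral_Iic {b : ℝ} (hb : 0 < b) (c : ℝ) :
    ∫ x in Iic c, Real.exp (b * x) = Real.exp (b * c) / b := by
  have h := integral_comp_neg_Iic c (fun x : ℝ => Real.exp (-(b * x)))
  simp only [neg_neg, mul_neg] at h
  rw [exp_integral_Ioi hb] at h
  have h2 : -(b * -c) = b * c := by ring
  rw [h, h2]

open Real Set in
private lemma exp_integrableOn_Iio {b : ℝ} (hb : 0 < b) (c : ℝ) :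
    IntegrableOn (fun x : ℝ => Real.exp (b * x)) (Iio c) :=
  (integrableOn_Iic_iff_integrableOn_Iio (by simp)).1 (exp_integrableOn_Iic hb c)

open Real Set in
private lemma exp_integral_Iio {b : ℝ} (hb : 0 < b) (c : ℝ) :
    ∫ x in Iio c, Real.exp (b * x) = Real.exp (b * c) / b := by
  rw [← integral_Iic_eq_integral_Iio, exp_integral_Iic hb]

open Real in
private lemma hasDerivAt_exp_mul (c : ℝ) :
    HasDerivAt (fun z : ℝ => Real.exp (c * z)) c 0 := by
  simpa using ((hasDerivAt_id (0 : ℝ)).const_mul c).exp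

/-- Derivative at 0 of the convolution of the piecewise-exponential density with the
piecewise-exponential fundamental solution, in the two-signal model. -/
theorem stmt_10 (lm lp mm mp : ℝ) (hlm : 0 < lm) (hlp : 0 < lp) (hmm : 0 < mm)
    (hmp : 0 < mp) (ρ 𝒜 A : ℝ → ℝ)
    (hρ : ∀ y, ρ y = if y < 0 then Real.exp (lm * y) else Real.exp (-lp * y))
    (h𝒜 : ∀ w, 𝒜 w = if w < 0 then Real.exp (mm * w) else Real.exp (-mp * w))
    (hA : ∀ z, A z = ∫ y, 𝒜 (z - y) * ρ y) :
    HasDerivAt A (mm / (mm + lp) - mp / (mp + lm)) 0 ∧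
    (mm / (mm + lp) - mp / (mp + lm) = 0 ↔ lm * mm = lp * mp) := by
  have hmmlp : (0:ℝ) < mm + lp := by linarith
  have hmplm : (0:ℝ) < mp + lm := by linarith
  have hmplm' : (0:ℝ) < mp + lm := hmplm
  constructor
  · -- derivative part
    set D : ℝ := mm / (mm + lp) - mp / (mp + lm) with hD
    set Gp : ℝ → ℝ := fun z => ∫ y in (0:ℝ)..z, Real.exp ((mp - lp) * y) with hGpdef
    set Gm : ℝ → ℝ := fun z => ∫ y in (0:ℝ)..z, Real.exp ((lm - mm) * y) with hGmdef
    set Fp : ℝ → ℝ := fun z => Real.exp (-mp * z) / (mp + lm)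
        + Real.exp (-lp * z) / (mm + lp) + Real.exp (-mp * z) * Gp z with hFpdef
    set Fm : ℝ → ℝ := fun z => Real.exp (lm * z) / (mp + lm)
        + Real.exp (mm * z) / (mm + lp) - Real.exp (mm * z) * Gm z with hFmdef
    -- derivatives of G's at 0
    have hGp : HasDerivAt Gp 1 0 := by
      have hcont : Continuous fun y : ℝ => Real.exp ((mp - lp) * y) :=
        (Real.continuous_exp.comp (continuous_const.mul continuous_id))
      have := intervalIntegral.integral_hasDerivAt_right
        (hcont.intervalIntegrable (0:ℝ) 0)
        (hcont.stronglyMeasurable.stronglyMeasurableAtFilter)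
        hcont.continuousAt
      simpa using this
    have hGm : HasDerivAt Gm 1 0 := by
      have hcont : Continuous fun y : ℝ => Real.exp ((lm - mm) * y) :=
        (Real.continuous_exp.comp (continuous_const.mul continuous_id))
      have := intervalIntegral.integral_hasDerivAt_right
        (hcont.intervalIntegrable (0:ℝ) 0)
        (hcont.stronglyMeasurable.stronglyMeasurableAtFilter)
        hcont.continuousAt
      simpa using this
    have hGp0 : Gp 0 = 0 := by simp [hGpdef]
    have hGm0 : Gm 0 = 0 := by simp [hGmdef]
    -- derivative of Fp at 0
    have hFp : HasDerivAt Fp D 0 := by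
      have h1 := ((hasDerivAt_exp_mul (-mp)).div_const (mp + lm)).add
        ((hasDerivAt_exp_mul (-lp)).div_const (mm + lp))
      have h2 := (hasDerivAt_exp_mul (-mp)).mul hGp
      have h3 := h1.add h2
      convert h3 using 1
      · rfl
      · rfl
      · rfl
      rw [hGp0]
      simp only [mul_zero, neg_mul, neg_zero, Real.exp_zero, mul_one, one_mul]
      rw [hD]
      field_simp
      ring
    have hFm : HasDerivAt Fm D 0 := by
      have h1 := ((hasDerivAt_exp_mul lm).div_const (mp + lm)).add
        ((hasDerivAt_exp_mul mm).div_const (mm + lp))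
      have h2 := (hasDerivAt_exp_mul mm).mul hGm
      have h3 := h1.sub h2
      convert h3 using 1
      · rfl
      · rfl
      · rfl
      rw [hGm0]
      simp only [mul_zero, Real.exp_zero, mul_one, one_mul]
      rw [hD]
      field_simp
      ring
    -- A agrees with Fp on Ici 0
    have hAp : ∀ z ∈ Set.Ici (0:ℝ), A z = Fp z := by
      intro z hz
      have hz' : (0:ℝ) ≤ z := hz
      -- pointwise identities on pieces
      have e1 : Set.EqOn (fun y => 𝒜 (z - y) * ρ y)
          (fun y => Real.exp (-mp * z) * Real.exp ((mp + lm) * y)) (Set.Iio 0) := by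
        intro y hy
        have hy' : y < 0 := hy
        have hzy : ¬ z - y < 0 := by push_neg; linarith
        simp only [h𝒜, hρ, if_pos hy', if_neg hzy, ← Real.exp_add]
        congr 1; ring
      have e2 : Set.EqOn (fun y => 𝒜 (z - y) * ρ y)
          (fun y => Real.exp (-mp * z) * Real.exp ((mp - lp) * y)) (Set.Ico 0 z) := by
        intro y hy
        have hy1 : (0:ℝ) ≤ y := hy.1
        have hy2 : y < z := hy.2
        have hzy : ¬ z - y < 0 := by push_neg; linarith
        have hy1' : ¬ y < 0 := not_lt.2 hy1
        simp only [h𝒜, hρ, if_neg hy1', if_neg hzy, ← Real.exp_add]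
        congr 1; ring
      have e3 : Set.EqOn (fun y => 𝒜 (z - y) * ρ y)
          (fun y => Real.exp (-lp * z) * Real.exp (-((mm + lp) * (y - z)))) (Set.Ici z) := by
        intro y hy
        have hy1 : z ≤ y := hy
        have hy0 : ¬ y < 0 := by push_neg; linarith
        simp only [h𝒜, hρ, if_neg hy0]
        rcases lt_or_eq_of_le hy1 with h | h
        · rw [if_pos (by linarith : z - y < 0), ← Real.exp_add, ← Real.exp_add]
          congr 1; ring
        · rw [if_neg (by rw [← h]; simp), ← Real.exp_add, ← Real.exp_add]
          rw [← h]; congr 1; ring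
      -- integrability of pieces
      have i1 : IntegrableOn (fun y => 𝒜 (z - y) * ρ y) (Set.Iio 0) := by
        refine IntegrableOn.congr_fun ?_ (fun y hy => (e1 hy).symm) measurableSet_Iio
        exact Integrable.const_mul (exp_integrableOn_Iio (by linarith : (0:ℝ) < mp + lm) 0) _
      have i2 : IntegrableOn (fun y => 𝒜 (z - y) * ρ y) (Set.Ico 0 z) := by
        have hc : Continuous fun y : ℝ => Real.exp (-mp * z) * Real.exp ((mp - lp) * y) :=
          continuous_const.mul (Real.continuous_exp.comp (continuous_const.mul continuous_id))
        refine IntegrableOn.congr_fun ?_ (fun y hy => (e2 hy).symm) measurableSet_Ico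
        exact ((hc.continuousOn.integrableOn_compact isCompact_Icc).mono_set Set.Ico_subset_Icc_self)
      have i3 : IntegrableOn (fun y => 𝒜 (z - y) * ρ y) (Set.Ici z) := by
        have : IntegrableOn (fun y : ℝ => Real.exp (-lp * z) * Real.exp (-((mm + lp) * (y - z)))) (Set.Ici z) := by
          have h0 : IntegrableOn (fun y : ℝ => Real.exp (-((mm + lp) * y))) (Set.Ici z) :=
            exp_integrableOn_Ici (by linarith) z
          have h1 : IntegrableOn (fun y : ℝ => Real.exp (-((mm + lp) * (y - z)))) (Set.Ici z) := by
            have h2 : IntegrableOn (fun y : ℝ => Real.exp ((mm + lp) * z) * Real.exp (-((mm + lp) * y))) (Set.Ici z) :=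
              h0.const_mul (Real.exp ((mm + lp) * z))
            refine IntegrableOn.congr_fun h2 (fun y hy => ?_) measurableSet_Ici
            rw [← Real.exp_add]; congr 1; ring
          exact h1.const_mul _
        exact IntegrableOn.congr_fun this (fun y hy => (e3 hy).symm) measurableSet_Ici
      -- split the integral
      have hsplit : Set.Ico 0 z ∪ Set.Ici z = Set.Ici (0:ℝ) := Set.Ico_union_Ici_eq_Ici hz'
      have hdisj : Disjoint (Set.Ico (0:ℝ) z) (Set.Ici z) :=
        Set.disjoint_left.2 fun y hy hy' => absurd hy' (not_le.2 hy.2)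
      have iIci : IntegrableOn (fun y => 𝒜 (z - y) * ρ y) (Set.Ici 0) := by
        rw [← hsplit]; exact i2.union i3
      have hsum : (∫ y in Set.Iio 0, 𝒜 (z - y) * ρ y) + (∫ y in Set.Ici 0, 𝒜 (z - y) * ρ y)
          = ∫ y, 𝒜 (z - y) * ρ y := intervalIntegral.integral_Iio_add_Ici i1 iIci
      have hIci : (∫ y in Set.Ici 0, 𝒜 (z - y) * ρ y)
          = (∫ y in Set.Ico 0 z, 𝒜 (z - y) * ρ y) + (∫ y in Set.Ici z, 𝒜 (z - y) * ρ y) := by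
        rw [← hsplit, setIntegral_union hdisj measurableSet_Ici i2 i3]
      -- compute each piece
      have p1 : (∫ y in Set.Iio 0, 𝒜 (z - y) * ρ y) = Real.exp (-mp * z) / (mp + lm) := by
        rw [setIntegral_congr_fun measurableSet_Iio e1, integral_const_mul,
          exp_integral_Iio (by linarith : (0:ℝ) < mp + lm)]
        norm_num
        ring_nf
      have p2 : (∫ y in Set.Ico 0 z, 𝒜 (z - y) * ρ y) = Real.exp (-mp * z) * Gp z := by
        rw [setIntegral_congr_fun measurableSet_Ico e2, integral_const_mul]
        congr 1
        rw [setIntegral_congr_set Ico_ae_eq_Ioc,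
          ← intervalIntegral.integral_of_le hz']
      have p3 : (∫ y in Set.Ici z, 𝒜 (z - y) * ρ y) = Real.exp (-lp * z) / (mm + lp) := by
        rw [setIntegral_congr_fun measurableSet_Ici e3, integral_const_mul]
        have : (∫ y in Set.Ici z, Real.exp (-((mm + lp) * (y - z))))
            = Real.exp ((mm + lp) * z) * ∫ y in Set.Ici z, Real.exp (-((mm + lp) * y)) := by
          rw [← integral_const_mul]
          refine setIntegral_congr_fun measurableSet_Ici (fun y hy => ?_)
          rw [← Real.exp_add]; congr 1; ring
        rw [this, exp_integral_Ici (by linarith : (0:ℝ) < mm + lp),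
          ← mul_div_assoc, ← mul_div_assoc, ← Real.exp_add, ← Real.exp_add]
        congr 1; ring
      rw [hA z, ← hsum, hIci, p1, p2, p3, hFpdef]
      ring
    -- A agrees with Fm on Iic 0
    have hAm : ∀ z ∈ Set.Iic (0:ℝ), A z = Fm z := by
      intro z hz
      have hz' : z ≤ (0:ℝ) := hz
      have e1 : Set.EqOn (fun y => 𝒜 (z - y) * ρ y)
          (fun y => Real.exp (-mp * z) * Real.exp ((mp + lm) * y)) (Set.Iio z) := by
        intro y hy
        have hy' : y < z := hy
        have hy0 : y < 0 := lt_of_lt_of_le hy' hz'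
        have hzy : ¬ z - y < 0 := by push_neg; linarith
        simp only [h𝒜, hρ, if_pos hy0, if_neg hzy, ← Real.exp_add]
        congr 1; ring
      have e2 : Set.EqOn (fun y => 𝒜 (z - y) * ρ y)
          (fun y => Real.exp (mm * z) * Real.exp ((lm - mm) * y)) (Set.Ico z 0) := by
        intro y hy
        have hy1 : z ≤ y := hy.1
        have hy2 : y < 0 := hy.2
        simp only [h𝒜, hρ, if_pos hy2]
        rcases lt_or_eq_of_le hy1 with h | h
        · rw [if_pos (by linarith : z - y < 0), ← Real.exp_add, ← Real.exp_add]
          congr 1; ring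
        · rw [if_neg (by rw [h]; simp), ← Real.exp_add, ← Real.exp_add]
          rw [h]; congr 1; ring
      have e3 : Set.EqOn (fun y => 𝒜 (z - y) * ρ y)
          (fun y => Real.exp (mm * z) * Real.exp (-((mm + lp) * y))) (Set.Ici 0) := by
        intro y hy
        have hy1 : (0:ℝ) ≤ y := hy
        have hy0 : ¬ y < 0 := not_lt.2 hy1
        simp only [h𝒜, hρ, if_neg hy0]
        rcases lt_or_eq_of_le (le_trans hz' hy1 : z ≤ y) with h | h
        · rw [if_pos (by linarith : z - y < 0), ← Real.exp_add, ← Real.exp_add]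
          congr 1; ring
        · rw [if_neg (by rw [h]; simp), ← Real.exp_add, ← Real.exp_add]
          rw [h]; congr 1; ring
      have i1 : IntegrableOn (fun y => 𝒜 (z - y) * ρ y) (Set.Iio z) := by
        refine IntegrableOn.congr_fun ?_ (fun y hy => (e1 hy).symm) measurableSet_Iio
        exact Integrable.const_mul (exp_integrableOn_Iio (by linarith : (0:ℝ) < mp + lm) z) _
      have i2 : IntegrableOn (fun y => 𝒜 (z - y) * ρ y) (Set.Ico z 0) := by
        have hc : Continuous fun y : ℝ => Real.exp (mm * z) * Real.exp ((lm - mm) * y) :=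
          continuous_const.mul (Real.continuous_exp.comp (continuous_const.mul continuous_id))
        refine IntegrableOn.congr_fun ?_ (fun y hy => (e2 hy).symm) measurableSet_Ico
        exact ((hc.continuousOn.integrableOn_compact isCompact_Icc).mono_set Set.Ico_subset_Icc_self)
      have i3 : IntegrableOn (fun y => 𝒜 (z - y) * ρ y) (Set.Ici 0) := by
        refine IntegrableOn.congr_fun ?_ (fun y hy => (e3 hy).symm) measurableSet_Ici
        exact Integrable.const_mul (exp_integrableOn_Ici (by linarith : (0:ℝ) < mm + lp) 0) _
      have hsplit : Set.Iio z ∪ Set.Ico z 0 = Set.Iio (0:ℝ) := Set.Iio_union_Ico_eq_Iio hz'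
      have hdisj : Disjoint (Set.Iio z) (Set.Ico z 0) :=
        Set.disjoint_left.2 fun y hy hy' => absurd hy'.1 (not_le.2 hy)
      have iIio : IntegrableOn (fun y => 𝒜 (z - y) * ρ y) (Set.Iio 0) := by
        rw [← hsplit]; exact i1.union i2
      have hsum : (∫ y in Set.Iio 0, 𝒜 (z - y) * ρ y) + (∫ y in Set.Ici 0, 𝒜 (z - y) * ρ y)
          = ∫ y, 𝒜 (z - y) * ρ y := intervalIntegral.integral_Iio_add_Ici iIio i3
      have hIio : (∫ y in Set.Iio 0, 𝒜 (z - y) * ρ y)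
          = (∫ y in Set.Iio z, 𝒜 (z - y) * ρ y) + (∫ y in Set.Ico z 0, 𝒜 (z - y) * ρ y) := by
        rw [← hsplit, setIntegral_union hdisj measurableSet_Ico i1 i2]
      have p1 : (∫ y in Set.Iio z, 𝒜 (z - y) * ρ y) = Real.exp (lm * z) / (mp + lm) := by
        rw [setIntegral_congr_fun measurableSet_Iio e1, integral_const_mul,
          exp_integral_Iio (by linarith : (0:ℝ) < mp + lm)]
        rw [← mul_div_assoc, ← Real.exp_add]
        congr 2
        ring
      have p2 : (∫ y in Set.Ico z 0, 𝒜 (z - y) * ρ y) = -(Real.exp (mm * z) * Gm z) := by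
        rw [setIntegral_congr_fun measurableSet_Ico e2, integral_const_mul]
        rw [← mul_neg]
        congr 1
        rw [setIntegral_congr_set Ico_ae_eq_Ioc,
          ← intervalIntegral.integral_of_le hz', hGmdef]
        exact intervalIntegral.integral_symm 0 z
      have p3 : (∫ y in Set.Ici 0, 𝒜 (z - y) * ρ y) = Real.exp (mm * z) / (mm + lp) := by
        rw [setIntegral_congr_fun measurableSet_Ici e3, integral_const_mul,
          exp_integral_Ici (by linarith : (0:ℝ) < mm + lp)]
        norm_num
        ring_nf
      rw [hA z, ← hsum, hIio, p1, p2, p3, hFmdef]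
      ring
    -- combine
    have hdp : HasDerivWithinAt A D (Set.Ici 0) 0 :=
      (hFp.hasDerivWithinAt).congr (fun y hy => hAp y hy) (hAp 0 (Set.mem_Ici.2 le_rfl))
    have hdm : HasDerivWithinAt A D (Set.Iic 0) 0 :=
      (hFm.hasDerivWithinAt).congr (fun y hy => hAm y hy) (hAm 0 (Set.mem_Iic.2 le_rfl))
    have := hdm.union hdp
    rw [Set.Iic_union_Ici] at this
    exact this.hasDerivAt (by simp)
  · -- algebraic part
    rw [sub_eq_zero, div_eq_div_iff hmmlp.ne' hmplm.ne']
    constructor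
    · intro h; nlinarith
    · intro h; nlinarith
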